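/- arXiv:1601.08172 — 3 statements merged into one kernel-verified Lean document; each statement's English description precedes it below -/
import Mathlib

section
/- Let M₁ and M₂ be groups with left-invariant distances and F : M₁ → M₂ an isometry such that conjugation by F maps left translations of M₁ onto left translations of M₂. Then F is affine, i.e., F is the composition of a left translation and a group homomorphism. -/
/-- Let `M₁`, `M₂` be groups with left-invariant distances and
`F : M₁ → M₂` an isometry such that conjugation by `F` maps the left translations of
`M₁` onto the left translations of `M₂`. Then `F` is affine, i.e. the composition of
a left translation and a group homomorphism. -/
theorem stmt_1 {M₁ M₂ : Type*} [Group M₁] [Group M₂] [MetricSpace M₁] [MetricSpace M₂]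
    (hd₁ : ∀ g x y : M₁, dist (g * x) (g * y) = dist x y)
    (hd₂ : ∀ g x y : M₂, dist (g * x) (g * y) = dist x y)
    (F : M₁ ≃ᵢ M₂)
    (honto : ∀ m : M₁, ∃ m' : M₂, ∀ x : M₂, F (m * F.symm x) = m' * x)
    (hinto : ∀ m' : M₂, ∃ m : M₁, ∀ x : M₂, F (m * F.symm x) = m' * x) :
    ∃ (a : M₂) (φ : M₁ →* M₂), ∀ x : M₁, F x = a * φ x := by
  have key : ∀ m y : M₁, F (m * y) = F m * (F 1)⁻¹ * F y := by
    intro m y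
    obtain ⟨m', hm'⟩ := honto m
    have h1 : F m = m' * F 1 := by
      have := hm' (F 1); simpa using this
    have h2 : F (m * y) = m' * F y := by
      have := hm' (F y); simpa using this
    rw [h2, h1]; group
  refine ⟨F 1, ⟨⟨fun x => (F 1)⁻¹ * F x, by simp⟩, fun x y => ?_⟩, fun x => by simp⟩
  simp only
  rw [key x y]
  group
end

section
/- Let M be a group with a left-invariant distance and G its isometry group. If the group Mᴸ of left translations is a normal subgroup of G, then every isometry of M is affine (a left translation composed with a group automorphism). -/
/-- Let `M` be a group with a left-invariant distance and `G` its
isometry group. If the group `Mᴸ` of left translations is normal in `G` (i.e. the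
conjugate of any left translation by any isometry is a left translation), then every
isometry of `M` is affine: a left translation composed with a group automorphism. -/
theorem stmt_2 {M : Type*} [Group M] [MetricSpace M]
    (hd : ∀ g x y : M, dist (g * x) (g * y) = dist x y)
    (hnormal : ∀ (F : M ≃ᵢ M) (m : M), ∃ m' : M, ∀ x : M, F (m * F.symm x) = m' * x) :
    ∀ F : M ≃ᵢ M, ∃ (a : M) (φ : M ≃* M), ∀ x : M, F x = a * φ x := by
  intro F
  have key : ∀ m y : M, F (m * y) = F m * (F 1)⁻¹ * F y := by
    intro m y
    obtain ⟨m', hm'⟩ := hnormal F m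
    have h1 := hm' (F 1)
    rw [F.symm_apply_apply, mul_one] at h1
    have hm'' : m' = F m * (F 1)⁻¹ := by
      rw [eq_mul_inv_iff_mul_eq, ← h1]
    have h2 := hm' (F y)
    rw [F.symm_apply_apply, hm''] at h2
    exact h2
  refine ⟨F 1, ⟨F.toEquiv.trans (Equiv.mulLeft (F 1)⁻¹), ?_⟩, ?_⟩
  · intro x y
    show (F 1)⁻¹ * F (x * y) = ((F 1)⁻¹ * F x) * ((F 1)⁻¹ * F y)
    rw [key x y]
    group
  · intro x
    show F x = F 1 * ((F 1)⁻¹ * F x)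
    rw [mul_inv_cancel_left]
end

section
/- Let M be a connected, locally compact metric space with left-invariant distance d on a topological group structure, such that some closed ball B̄_d(1, r₀) is compact. Define ρ(p,q) as the infimum of sums Σ d(p_{i-1}, p_i) over finite chains p = p₀, …, p_k = q with d(p_{i-1}, p_i) ≤ r₀. Then ρ is a left-invariant distance on M inducing the same topology, every isometry of (M, d) is an isometry of (M, ρ), and all closed ρ-balls are compact. -/
open Finset Metric

section ChainAux

variable {M : Type*} [MetricSpace M]

/-- The set of chain sums from `p` to `q` with step bound `r₀`. -/
def chS (r₀ : ℝ) (p q : M) : Set ℝ :=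
  {s : ℝ | ∃ (k : ℕ) (c : Fin (k + 1) → M),
    c 0 = p ∧ c (Fin.last k) = q ∧
    (∀ i : Fin k, dist (c i.castSucc) (c i.succ) ≤ r₀) ∧
    s = ∑ i : Fin k, dist (c i.castSucc) (c i.succ)}

lemma ceq {n : ℕ} (c : Fin n → M) (a b : Fin n) (h : (a : ℕ) = (b : ℕ)) : c a = c b :=
  congrArg c (Fin.ext h)

lemma dceq {n : ℕ} (c : Fin n → M) (a b a' b' : Fin n)
    (h1 : (a : ℕ) = (a' : ℕ)) (h2 : (b : ℕ) = (b' : ℕ)) :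
    dist (c a) (c b) = dist (c a') (c b') := by
  rw [ceq c a a' h1, ceq c b b' h2]

/-- `ℕ`-indexed step distances of a chain. -/
def stepD {k : ℕ} (c : Fin (k + 1) → M) (n : ℕ) : ℝ :=
  if h : n + 1 ≤ k then dist (c ⟨n, by omega⟩) (c ⟨n + 1, by omega⟩) else 0

lemma stepD_eq {k : ℕ} (c : Fin (k + 1) → M) (i : Fin k) :
    dist (c i.castSucc) (c i.succ) = stepD c (i : ℕ) := by
  have h : (i : ℕ) + 1 ≤ k := i.isLt
  rw [stepD, dif_pos h]
  exact dceq c _ _ _ _ (by simp) (by simp)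

lemma stepD_le {k : ℕ} {c : Fin (k + 1) → M} {r₀ : ℝ}
    (hst : ∀ i : Fin k, dist (c i.castSucc) (c i.succ) ≤ r₀) {n : ℕ} (hn : n < k) :
    stepD c n ≤ r₀ := by
  have := hst ⟨n, hn⟩
  rwa [stepD_eq] at this

lemma chain_sum_eq {k : ℕ} (c : Fin (k + 1) → M) :
    ∑ i : Fin k, dist (c i.castSucc) (c i.succ) = ∑ i ∈ range k, stepD c i := by
  rw [← Fin.sum_univ_eq_sum_range (stepD c) k]
  exact Finset.sum_congr rfl fun i _ => stepD_eq c i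

lemma chain_lb : ∀ (k : ℕ) (c : Fin (k + 1) → M),
    dist (c 0) (c (Fin.last k)) ≤ ∑ i : Fin k, dist (c i.castSucc) (c i.succ) := by
  intro k
  induction k with
  | zero => intro c; simp [Fin.last]
  | succ k ih =>
    intro c
    have h1 := ih (fun i => c i.castSucc)
    refine le_trans (dist_triangle (c 0) (c (Fin.last k).castSucc) (c (Fin.last (k + 1)))) ?_
    rw [Fin.sum_univ_castSucc (fun i : Fin (k + 1) => dist (c i.castSucc) (c i.succ))]
    apply add_le_add
    · refine le_trans (le_of_eq ?_) (le_trans h1 (le_of_eq ?_))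
      · exact dceq c _ _ _ _ (by simp) (by simp)
      · exact Finset.sum_congr rfl fun i _ => dceq c _ _ _ _ (by simp) (by simp)
    · exact le_of_eq (dceq c _ _ _ _ (by simp) (by simp))

lemma chS_lb {r₀ s : ℝ} {p q : M} (hs : s ∈ chS r₀ p q) : dist p q ≤ s := by
  obtain ⟨k, c, h0, hl, _, hsum⟩ := hs
  subst hsum
  rw [← h0, ← hl]
  exact chain_lb k c

lemma zero_mem_chS (r₀ : ℝ) (p : M) : (0 : ℝ) ∈ chS r₀ p p :=
  ⟨0, fun _ => p, rfl, rfl, fun i => i.elim0, by simp⟩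

lemma single_mem_chS {r₀ : ℝ} {p q : M} (h : dist p q ≤ r₀) : dist p q ∈ chS r₀ p q := by
  refine ⟨1, ![p, q], rfl, rfl, fun i => ?_, by simp⟩
  fin_cases i
  simpa using h

lemma map_mem_chS {r₀ s : ℝ} {p q : M} {N : Type*} [MetricSpace N] {f : M → N}
    (hf : ∀ x y, dist (f x) (f y) = dist x y) (hs : s ∈ chS r₀ p q) :
    s ∈ chS r₀ (f p) (f q) := by
  obtain ⟨k, c, h0, hl, hst, hsum⟩ := hs
  exact ⟨k, f ∘ c, by simp [h0], by simp [hl],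
    fun i => by simpa [hf] using hst i, by simpa [hf] using hsum⟩

lemma rev_mem_chS {r₀ s : ℝ} {p q : M} (hs : s ∈ chS r₀ p q) : s ∈ chS r₀ q p := by
  obtain ⟨k, c, h0, hl, hst, hsum⟩ := hs
  refine ⟨k, fun i => c i.rev, ?_, ?_, fun i => ?_, ?_⟩
  · simpa [Fin.rev_zero] using hl
  · simpa [Fin.rev_last] using h0
  · simp only [Fin.rev_castSucc, Fin.rev_succ]
    rw [dist_comm]
    exact hst i.rev
  · rw [hsum]
    have h1 : ∀ i : Fin k,
        dist (c i.castSucc.rev) (c i.succ.rev)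
          = dist (c i.rev.castSucc) (c i.rev.succ) := by
      intro i
      rw [Fin.rev_castSucc, Fin.rev_succ, dist_comm]
    calc ∑ i : Fin k, dist (c i.castSucc) (c i.succ)
        = ∑ i : Fin k, dist (c i.rev.castSucc) (c i.rev.succ) :=
          (Equiv.sum_comp (Fin.revPerm) (fun j : Fin k => dist (c j.castSucc) (c j.succ))).symm
      _ = ∑ i : Fin k, dist (c i.castSucc.rev) (c i.succ.rev) :=
          Finset.sum_congr rfl fun i _ => (h1 i).symm

lemma concat_mem_chS {r₀ s t : ℝ} {p q r : M}
    (hs : s ∈ chS r₀ p q) (ht : t ∈ chS r₀ q r) : s + t ∈ chS r₀ p r := by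
  classical
  obtain ⟨k₁, c₁, h10, h1l, h1s, h1sum⟩ := hs
  obtain ⟨k₂, c₂, h20, h2l, h2s, h2sum⟩ := ht
  set e : Fin (k₁ + k₂ + 1) → M := fun i =>
    if h : (i : ℕ) ≤ k₁ then c₁ ⟨i, by omega⟩ else c₂ ⟨(i : ℕ) - k₁, by have := i.isLt; omega⟩
    with he_def
  have heA : ∀ (m : ℕ) (hm : m < k₁ + k₂ + 1) (h : m ≤ k₁),
      e ⟨m, hm⟩ = c₁ ⟨m, by omega⟩ := by
    intro m hm h
    simp only [he_def]
    rw [dif_pos h]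
  have heB : ∀ (m : ℕ) (hm : m < k₁ + k₂ + 1) (h : k₁ ≤ m),
      e ⟨m, hm⟩ = c₂ ⟨m - k₁, by omega⟩ := by
    intro m hm h
    rcases eq_or_lt_of_le h with h' | h'
    · have hq1 : c₁ (⟨m, by omega⟩ : Fin (k₁ + 1)) = q := by
        rw [← h1l]
        exact ceq c₁ _ _ (by simp <;> omega)
      rw [heA m hm (le_of_eq h'.symm), hq1, ← h20]
      exact ceq c₂ _ _ (by simp <;> omega)
    · simp only [he_def]
      rw [dif_neg (by omega)]
  have hstepE : ∀ n, n < k₁ + k₂ →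
      stepD e n = if n < k₁ then stepD c₁ n else stepD c₂ (n - k₁) := by
    intro n hn
    by_cases hc : n < k₁
    · rw [if_pos hc, stepD, stepD, dif_pos (by omega : n + 1 ≤ k₁ + k₂),
        dif_pos (by omega : n + 1 ≤ k₁),
        heA n (by omega) (by omega), heA (n + 1) (by omega) (by omega)]
    · rw [if_neg hc, stepD, stepD, dif_pos (by omega : n + 1 ≤ k₁ + k₂),
        dif_pos (by omega : n - k₁ + 1 ≤ k₂),
        heB n (by omega) (by omega), heB (n + 1) (by omega) (by omega)]
      exact dceq c₂ _ _ _ _ (by simp <;> omega) (by simp <;> omega)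
  refine ⟨k₁ + k₂, e, ?_, ?_, fun i => ?_, ?_⟩
  · have h0 : (0 : Fin (k₁ + k₂ + 1)) = ⟨0, by omega⟩ := by
      ext; simp
    rw [h0, heA 0 (by omega) (Nat.zero_le _), ← h10]
    exact ceq c₁ _ _ (by simp <;> omega)
  · have hlast : Fin.last (k₁ + k₂) = ⟨k₁ + k₂, by omega⟩ := rfl
    rw [hlast, heB (k₁ + k₂) (by omega) (by omega), ← h2l]
    exact ceq c₂ _ _ (by simp <;> omega)
  · rw [stepD_eq e i, hstepE i i.isLt]
    split_ifs with h
    · exact stepD_le h1s h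
    · exact stepD_le h2s (by have := i.isLt; omega)
  · rw [chain_sum_eq e]
    have hsplit : ∑ n ∈ range (k₁ + k₂), stepD e n
        = ∑ n ∈ range k₁, stepD c₁ n + ∑ n ∈ range k₂, stepD c₂ n := by
      rw [Finset.sum_range_add]
      congr 1
      · exact Finset.sum_congr rfl fun n hn => by
          rw [hstepE n (by have := mem_range.mp hn; omega), if_pos (mem_range.mp hn)]
      · exact Finset.sum_congr rfl fun n hn => by
          rw [hstepE (k₁ + n) (by have := mem_range.mp hn; omega), if_neg (by omega)]
          congr 1
          omega
    rw [hsplit, ← chain_sum_eq c₁, ← chain_sum_eq c₂, ← h1sum, ← h2sum]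

lemma subchain_mem_chS {r₀ : ℝ} {k : ℕ} {c : Fin (k + 1) → M}
    (hst : ∀ i : Fin k, dist (c i.castSucc) (c i.succ) ≤ r₀)
    {a b : ℕ} (hab : a ≤ b) (hbk : b ≤ k) :
    (∑ n ∈ Finset.Ico a b, stepD c n) ∈
      chS r₀ (c ⟨a, by omega⟩) (c ⟨b, by omega⟩) := by
  have h1 : ∀ j : Fin (b - a),
      dist (c ⟨a + ((j.castSucc : Fin (b - a + 1)) : ℕ), by have := j.isLt; omega⟩)
           (c ⟨a + ((j.succ : Fin (b - a + 1)) : ℕ), by have := j.isLt; omega⟩)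
        = stepD c (a + (j : ℕ)) := by
    intro j
    have hj := j.isLt
    rw [stepD, dif_pos (by omega : a + (j : ℕ) + 1 ≤ k)]
    exact dceq c _ _ _ _ (by simp <;> omega) (by simp <;> omega)
  refine ⟨b - a, fun j => c ⟨a + (j : ℕ), by have := j.isLt; omega⟩, ?_, ?_, fun j => ?_, ?_⟩
  · refine ceq c _ _ ?_
    simp
  · refine ceq c _ _ ?_
    simp
    omega
  · have hj := j.isLt
    rw [h1 j]
    exact stepD_le hst (by omega)
  · rw [Finset.sum_Ico_eq_sum_range (stepD c) a b,
      ← Fin.sum_univ_eq_sum_range (fun n => stepD c (a + n)) (b - a)]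
    exact Finset.sum_congr rfl fun j _ => (h1 j).symm

end ChainAux


/-- Let `M` be a connected topological group with a left-invariant
distance `d` inducing its topology, such that the closed ball `B̄_d(1, r₀)` is compact
for some `r₀ > 0`. Define `ρ p q` as the infimum of `Σ d(p_{i-1}, p_i)` over finite
chains `p = p₀, …, p_k = q` with `d(p_{i-1}, p_i) ≤ r₀`. Then `ρ` is a left-invariant
distance on `M` inducing the same topology, every isometry of `(M, d)` is an isometry
of `(M, ρ)`, and all closed `ρ`-balls are compact. -/
theorem stmt_18 {M : Type*} [Group M] [MetricSpace M] [IsTopologicalGroup M]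
    [ConnectedSpace M]
    (hd : ∀ g x y : M, dist (g * x) (g * y) = dist x y)
    (r₀ : ℝ) (hr₀ : 0 < r₀) (hcpt : IsCompact (Metric.closedBall (1 : M) r₀))
    (ρ : M → M → ℝ)
    (hρ : ∀ p q : M, ρ p q = sInf {s : ℝ | ∃ (k : ℕ) (c : Fin (k + 1) → M),
      c 0 = p ∧ c (Fin.last k) = q ∧
      (∀ i : Fin k, dist (c i.castSucc) (c i.succ) ≤ r₀) ∧
      s = ∑ i : Fin k, dist (c i.castSucc) (c i.succ)}) :
    (∀ p q : M, 0 ≤ ρ p q) ∧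
    (∀ p q : M, ρ p q = 0 ↔ p = q) ∧
    (∀ p q : M, ρ p q = ρ q p) ∧
    (∀ p q r : M, ρ p r ≤ ρ p q + ρ q r) ∧
    (∀ g p q : M, ρ (g * p) (g * q) = ρ p q) ∧
    (∀ s : Set M, IsOpen s ↔ ∀ p ∈ s, ∃ ε > 0, ∀ q : M, ρ p q < ε → q ∈ s) ∧
    (∀ (F : M ≃ᵢ M) (p q : M), ρ (F p) (F q) = ρ p q) ∧
    (∀ (p : M) (r : ℝ), IsCompact {q : M | ρ p q ≤ r}) := by
    classical
  have hrho : ∀ p q : M, ρ p q = sInf (chS r₀ p q) := hρ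
  have hne : ∀ p q : M, (chS r₀ p q).Nonempty := by
    intro p q
    have hclopen : IsClopen {z : M | (chS r₀ p z).Nonempty} := by
      constructor
      · rw [← isOpen_compl_iff, Metric.isOpen_iff]
        intro z hz
        refine ⟨r₀, hr₀, fun w hw hwmem => ?_⟩
        obtain ⟨s, hs⟩ := hwmem
        exact hz ⟨s + dist w z, concat_mem_chS hs (single_mem_chS (Metric.mem_ball.mp hw).le)⟩
      · rw [Metric.isOpen_iff]
        intro z hz
        obtain ⟨s, hs⟩ := hz
        refine ⟨r₀, hr₀, fun w hw => ?_⟩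
        refine ⟨s + dist z w, concat_mem_chS hs (single_mem_chS ?_)⟩
        rw [dist_comm]
        exact (Metric.mem_ball.mp hw).le
    have := hclopen.eq_univ ⟨p, ⟨0, zero_mem_chS r₀ p⟩⟩
    exact Set.eq_univ_iff_forall.mp this q
  have hbdd : ∀ p q : M, BddBelow (chS r₀ p q) :=
    fun p q => ⟨0, fun s hs => le_trans dist_nonneg (chS_lb hs)⟩
  have h_le : ∀ {p q : M} {s : ℝ}, s ∈ chS r₀ p q → ρ p q ≤ s := by
    intro p q s hs
    rw [hrho]
    exact csInf_le (hbdd p q) hs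
  have h_ge : ∀ p q : M, dist p q ≤ ρ p q := by
    intro p q
    rw [hrho]
    exact le_csInf (hne p q) fun s hs => chS_lb hs
  have h_nonneg : ∀ p q : M, 0 ≤ ρ p q := fun p q => le_trans dist_nonneg (h_ge p q)
  have h_self : ∀ p : M, ρ p p = 0 :=
    fun p => le_antisymm (h_le (zero_mem_chS r₀ p)) (h_nonneg p p)
  have h_eq : ∀ p q : M, ρ p q = 0 ↔ p = q := by
    intro p q
    constructor
    · intro h
      have := h_ge p q
      rw [h] at this
      exact dist_le_zero.mp this
    · rintro rfl
      exact h_self p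
  have h_symm : ∀ p q : M, ρ p q = ρ q p := by
    intro p q
    rw [hrho, hrho]
    congr 1
    exact Set.Subset.antisymm (fun s hs => rev_mem_chS hs) (fun s hs => rev_mem_chS hs)
  have h_tri : ∀ p q r : M, ρ p r ≤ ρ p q + ρ q r := by
    intro p q r
    refine le_of_forall_pos_le_add fun ε hε => ?_
    obtain ⟨s, hs, hslt⟩ := exists_lt_of_csInf_lt (hne p q)
      (show sInf (chS r₀ p q) < ρ p q + ε / 2 by rw [← hrho]; linarith)
    obtain ⟨t, ht, htlt⟩ := exists_lt_of_csInf_lt (hne q r)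
      (show sInf (chS r₀ q r) < ρ q r + ε / 2 by rw [← hrho]; linarith)
    have := h_le (concat_mem_chS hs ht)
    linarith
  have h_le_dist : ∀ p q : M, dist p q ≤ r₀ → ρ p q ≤ dist p q :=
    fun p q h => h_le (single_mem_chS h)
  have h_inv : ∀ g p q : M, ρ (g * p) (g * q) = ρ p q := by
    intro g p q
    rw [hrho, hrho]
    congr 1
    apply Set.Subset.antisymm
    · intro s hs
      have := map_mem_chS (f := fun x => g⁻¹ * x) (fun x y => hd g⁻¹ x y) hs
      simpa using this
    · intro s hs
      exact map_mem_chS (f := fun x => g * x) (fun x y => hd g x y) hs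
  have h_iso : ∀ (F : M ≃ᵢ M) (p q : M), ρ (F p) (F q) = ρ p q := by
    intro F p q
    rw [hrho, hrho]
    congr 1
    apply Set.Subset.antisymm
    · intro s hs
      have := map_mem_chS (f := F.symm) (fun x y => F.symm.dist_eq x y) hs
      simpa using this
    · intro s hs
      exact map_mem_chS (f := F) (fun x y => F.dist_eq x y) hs
  have h_cont : ∀ p : M, Continuous fun q => ρ p q := by
    intro p
    rw [Metric.continuous_iff]
    intro q ε hε
    refine ⟨min ε r₀, lt_min hε hr₀, fun q' hq' => ?_⟩
    have hcomm : dist q q' = dist q' q := dist_comm q q'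
    have h1 : ρ p q' ≤ ρ p q + ρ q q' := h_tri p q q'
    have h2 : ρ p q ≤ ρ p q' + ρ q' q := h_tri p q' q
    have h3 : ρ q q' ≤ dist q q' :=
      h_le_dist _ _ (by rw [hcomm]; exact (lt_of_lt_of_le hq' (min_le_right _ _)).le)
    have h4 : ρ q' q ≤ dist q' q :=
      h_le_dist _ _ (lt_of_lt_of_le hq' (min_le_right _ _)).le
    have h5 : dist q' q < ε := lt_of_lt_of_le hq' (min_le_left _ _)
    have h6 : 0 ≤ ρ q q' := h_nonneg q q'
    have h7 : 0 ≤ ρ q' q := h_nonneg q' q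
    rw [Real.dist_eq, abs_sub_lt_iff]
    constructor <;> linarith
  have htop : ∀ s : Set M, IsOpen s ↔ ∀ p ∈ s, ∃ ε > 0, ∀ q : M, ρ p q < ε → q ∈ s := by
    intro s
    constructor
    · intro hs p hp
      obtain ⟨ε, hε, hball⟩ := Metric.isOpen_iff.mp hs p hp
      refine ⟨ε, hε, fun q hq => ?_⟩
      apply hball
      rw [Metric.mem_ball, dist_comm]
      exact lt_of_le_of_lt (h_ge p q) hq
    · intro h
      rw [Metric.isOpen_iff]
      intro p hp
      obtain ⟨ε, hε, h2⟩ := h p hp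
      refine ⟨min ε r₀, lt_min hε hr₀, fun q hq => ?_⟩
      rw [Metric.mem_ball] at hq
      apply h2
      have hd' : dist p q ≤ r₀ := by
        rw [dist_comm]
        exact (lt_of_lt_of_le hq (min_le_right _ _)).le
      refine lt_of_le_of_lt (h_le_dist p q hd') ?_
      rw [dist_comm]
      exact lt_of_lt_of_le hq (min_le_left ε r₀)
  have hd1 : ∀ x y : M, dist (x⁻¹ * y) 1 = dist x y := by
    intro x y
    have h := hd x 1 (x⁻¹ * y)
    simp only [mul_one, mul_inv_cancel_left] at h
    rw [dist_comm]
    exact h.symm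
  have key : ∀ (p : M) (r : ℝ) (q : M), ρ p q ≤ r →
      ∃ x b b', ρ p x ≤ max 0 (r - r₀ / 2) ∧ b ∈ Metric.closedBall (1 : M) r₀ ∧
        b' ∈ Metric.closedBall (1 : M) r₀ ∧ q = x * b * b' := by
    intro p r q hq
    by_cases hc : ρ p q ≤ max 0 (r - r₀ / 2)
    · exact ⟨q, 1, 1, hc, by simp [hr₀.le], by simp [hr₀.le], by simp⟩
    push_neg at hc
    obtain ⟨s, hsmem, hslt⟩ := exists_lt_of_csInf_lt (hne p q)
      (show sInf (chS r₀ p q) < ρ p q + r₀ / 2 by rw [← hrho]; linarith)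
    obtain ⟨k, c, h0, hl, hst, hsum⟩ := hsmem
    have hsr : s < r + r₀ / 2 := by linarith
    set T : ℕ → ℝ := fun i => ∑ n ∈ Finset.Ico i k, stepD c n with hT
    have hsT : ∀ j, j ≤ k → (∑ n ∈ Finset.Ico 0 j, stepD c n) + T j = s := by
      intro j hj
      rw [hsum, chain_sum_eq c, Finset.range_eq_Ico]
      exact Finset.sum_Ico_consecutive (stepD c) (Nat.zero_le j) hj
    have hex : ∃ i, i ≤ k ∧ T i ≤ r₀ := ⟨k, le_rfl, by simp [hT, hr₀.le]⟩
    set i := Nat.find hex with hi_def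
    obtain ⟨hik, hTi⟩ : i ≤ k ∧ T i ≤ r₀ := Nat.find_spec hex
    by_cases hi0 : i = 0
    · have hT0 : T 0 = s := by
        have h00 := hsT 0 (Nat.zero_le k)
        simpa using h00
      have hs0 : s ≤ r₀ := by
        rw [hi0] at hTi
        linarith [hTi, hT0.ge]
      have hdpq : dist p q ≤ r₀ := le_trans (chS_lb ⟨k, c, h0, hl, hst, hsum⟩) hs0
      refine ⟨p, p⁻¹ * q, 1, ?_, ?_, by simp [hr₀.le], by simp⟩
      · rw [h_self p]
        exact le_max_left _ _
      · rw [Metric.mem_closedBall, hd1]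
        exact hdpq
    · have hi1 : 1 ≤ i := Nat.one_le_iff_ne_zero.mpr hi0
      have hmin : ¬(i - 1 ≤ k ∧ T (i - 1) ≤ r₀) := Nat.find_min hex (by omega)
      have hTi1 : r₀ < T (i - 1) := by
        by_contra hcon
        push_neg at hcon
        exact hmin ⟨by omega, hcon⟩
      have hpre : (∑ n ∈ Finset.Ico 0 (i - 1), stepD c n) ∈ chS r₀ p (c ⟨i - 1, by omega⟩) := by
        have hsub := subchain_mem_chS hst (Nat.zero_le (i - 1)) (by omega : i - 1 ≤ k)
        have hc0 : c ⟨0, by omega⟩ = p := by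
          rw [← h0]
          exact ceq c _ _ (by simp)
        rwa [hc0] at hsub
      have hρpx : ρ p (c ⟨i - 1, by omega⟩) ≤ max 0 (r - r₀ / 2) := by
        have h5 := hsT (i - 1) (by omega)
        have h6 := h_le hpre
        refine le_trans ?_ (le_max_right 0 (r - r₀ / 2))
        linarith
      have hxy : dist (c ⟨i - 1, by omega⟩) (c ⟨i, by omega⟩) ≤ r₀ := by
        have heq : dist (c ⟨i - 1, by omega⟩) (c ⟨i, by omega⟩) = stepD c (i - 1) := by
          rw [stepD, dif_pos (by omega : i - 1 + 1 ≤ k)]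
          exact dceq c _ _ _ _ rfl (by simp; omega)
        rw [heq]
        exact stepD_le hst (by omega)
      have hyq : dist (c ⟨i, by omega⟩) q ≤ r₀ := by
        have hsub := subchain_mem_chS hst hik (le_refl k)
        have hck : c ⟨k, by omega⟩ = q := by
          rw [← hl]
          exact ceq c _ _ (by simp)
        rw [hck] at hsub
        exact le_trans (chS_lb hsub) hTi
      refine ⟨c ⟨i - 1, by omega⟩, (c ⟨i - 1, by omega⟩)⁻¹ * c ⟨i, by omega⟩,
        (c ⟨i, by omega⟩)⁻¹ * q, hρpx, ?_, ?_, by group⟩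
      · rw [Metric.mem_closedBall, hd1]
        exact hxy
      · rw [Metric.mem_closedBall, hd1]
        exact hyq
  have hclosed : ∀ (p : M) (r : ℝ), IsClosed {q : M | ρ p q ≤ r} := by
    intro p r
    exact IsClosed.preimage (h_cont p) isClosed_Iic
  have hcompact : ∀ (p : M) (r : ℝ), IsCompact {q : M | ρ p q ≤ r} := by
    intro p r
    have main : ∀ n : ℕ, ∀ r' : ℝ, r' ≤ n * (r₀ / 2) → IsCompact {q : M | ρ p q ≤ r'} := by
      intro n
      induction n with
      | zero =>
        intro r' hr'
        apply Set.Subsingleton.isCompact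
        intro a ha b hb
        simp only [Set.mem_setOf_eq] at ha hb
        simp only [Nat.cast_zero, zero_mul] at hr'
        have ha' : a = p := ((h_eq p a).mp (le_antisymm (ha.trans hr') (h_nonneg p a))).symm
        have hb' : b = p := ((h_eq p b).mp (le_antisymm (hb.trans hr') (h_nonneg p b))).symm
        rw [ha', hb']
      | succ n ih =>
        intro r' hr'
        have h1 : max 0 (r' - r₀ / 2) ≤ n * (r₀ / 2) := by
          apply max_le
          · positivity
          · push_cast at hr' ⊢
            linarith
        have hK1 := ih _ h1
        have hKmap : IsCompact ((fun t : (M × M) × M => t.1.1 * t.1.2 * t.2) ''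
            (({q : M | ρ p q ≤ max 0 (r' - r₀ / 2)} ×ˢ Metric.closedBall (1 : M) r₀) ×ˢ
              Metric.closedBall (1 : M) r₀)) :=
          ((hK1.prod hcpt).prod hcpt).image (by fun_prop)
        apply IsCompact.of_isClosed_subset hKmap (hclosed p r')
        intro q hq
        obtain ⟨x, b, b', hx, hb, hb', rfl⟩ := key p r' q hq
        exact ⟨((x, b), b'), ⟨⟨hx, hb⟩, hb'⟩, rfl⟩
    obtain ⟨n, hn⟩ := exists_nat_ge (r / (r₀ / 2))
    apply main n
    rw [div_le_iff₀ (by positivity)] at hn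
    linarith
  exact ⟨h_nonneg, h_eq, h_symm, h_tri, h_inv, htop, h_iso, hcompact⟩
end
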